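/- arXiv:2403.01959 — 3 statements merged into one kernel-verified Lean document; each statement's English description precedes it below -/
import Mathlib

section
/- Let N ≥ 1, c ∈ ℝ and a ∈ ℝ^N with |a| < 1. Then for every continuously differentiable function u : ℝ^{N+1}_+ → ℂ whose full gradient ∇u lies in L²_c, one has |Im 𝔞(u,u)| ≤ (|a|/(1−|a|)) Re 𝔞(u,u), where 𝔞(u,u) = ∫_{ℝ^{N+1}_+} |∇u|² y^c dx dy + 2∫_{ℝ^{N+1}_+} (D_y u)(a·∇_x ū) y^c dx dy. In particular the form 𝔞 is sectorial. -/
/-! Write `𝔞(u,u) = A + 2J` with `A = ∫ |∇u|² y^c` real. Pointwise, Cauchy–Schwarz and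
AM–GM give `2 |D_y u| |a·∇ₓu| ≤ |a| |∇u|²`, so `‖2J‖ ≤ |a| A`. Hence `|Im 𝔞| ≤ |a| A` while
`Re 𝔞 ≥ (1 - |a|) A`. -/

open MeasureTheory Real

noncomputable section

/-- The upper half-space `ℝ^{N+1}_+`. -/
def HS (N : ℕ) : Set ((Fin N → ℝ) × ℝ) := {z | 0 < z.2}

/-- Partial derivative of `u` in the `i`-th `x` direction. -/
def pXc {N : ℕ} (u : ((Fin N → ℝ) × ℝ) → ℂ) (i : Fin N) (z : (Fin N → ℝ) × ℝ) : ℂ :=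
  fderiv ℝ u z (Pi.single i 1, 0)

/-- Partial derivative of `u` in the `y` direction. -/
def pYc {N : ℕ} (u : ((Fin N → ℝ) × ℝ) → ℂ) (z : (Fin N → ℝ) × ℝ) : ℂ :=
  fderiv ℝ u z (0, 1)

/-- Squared Euclidean norm of the full gradient `∇u`. -/
def gradSqC {N : ℕ} (u : ((Fin N → ℝ) × ℝ) → ℂ) (z : (Fin N → ℝ) × ℝ) : ℝ :=
  (∑ i, ‖pXc u i z‖ ^ 2) + ‖pYc u z‖ ^ 2

/-- The sesquilinear form
`𝔞(u,v) = ∫ ⟨∇u, ∇v̄⟩ y^c + 2 ∫ (D_y u)(a·∇_x v̄) y^c` on the half-space. -/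
def aForm (N : ℕ) (c : ℝ) (a : Fin N → ℝ) (u v : ((Fin N → ℝ) × ℝ) → ℂ) : ℂ :=
  (∫ z in HS N, ((∑ i, pXc u i z * (starRingEnd ℂ) (pXc v i z)) +
      pYc u z * (starRingEnd ℂ) (pYc v z)) * ((z.2 ^ c : ℝ) : ℂ)) +
  2 * ∫ z in HS N, (pYc u z * ∑ i, (a i : ℂ) * (starRingEnd ℂ) (pXc v i z)) *
      ((z.2 ^ c : ℝ) : ℂ)

open ComplexConjugate

lemma norm_sum_ofReal_mul_conj_le {ι : Type*} [Fintype ι] (a : ι → ℝ) (v : ι → ℂ) :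
    ‖∑ i, (a i : ℂ) * conj (v i)‖ ≤ √(∑ i, a i ^ 2) * √(∑ i, ‖v i‖ ^ 2) :=
  calc ‖∑ i, (a i : ℂ) * conj (v i)‖
      ≤ ∑ i, ‖(a i : ℂ) * conj (v i)‖ := norm_sum_le _ _
    _ = ∑ i, |a i| * ‖v i‖ := by simp
    _ ≤ √(∑ i, |a i| ^ 2) * √(∑ i, ‖v i‖ ^ 2) := Real.sum_mul_le_sqrt_mul_sqrt _ _ _
    _ = √(∑ i, a i ^ 2) * √(∑ i, ‖v i‖ ^ 2) := by simp only [sq_abs]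

lemma norm_mul_sum_ofReal_mul_conj_le {ι : Type*} [Fintype ι] (a : ι → ℝ) (p : ℂ)
    (v : ι → ℂ) :
    ‖p * ∑ i, (a i : ℂ) * conj (v i)‖
      ≤ √(∑ i, a i ^ 2) / 2 * ((∑ i, ‖v i‖ ^ 2) + ‖p‖ ^ 2) := by
  set s := √(∑ i, a i ^ 2)
  set t := √(∑ i, ‖v i‖ ^ 2)
  have ht : t ^ 2 = ∑ i, ‖v i‖ ^ 2 := Real.sq_sqrt (by positivity)
  calc ‖p * ∑ i, (a i : ℂ) * conj (v i)‖
      ≤ ‖p‖ * (s * t) := by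
        rw [norm_mul]; gcongr; exact norm_sum_ofReal_mul_conj_le a v
    _ ≤ s / 2 * (t ^ 2 + ‖p‖ ^ 2) := by
        nlinarith [mul_nonneg (Real.sqrt_nonneg (∑ i, a i ^ 2)) (sq_nonneg (‖p‖ - t))]
    _ = s / 2 * ((∑ i, ‖v i‖ ^ 2) + ‖p‖ ^ 2) := by rw [ht]

lemma abs_im_le_div_mul_re_of_norm_le {s A : ℝ} {w : ℂ} (hs₀ : 0 ≤ s) (hs₁ : s < 1)
    (hw : ‖w‖ ≤ s * A) :
    |((A : ℂ) + w).im| ≤ s / (1 - s) * ((A : ℂ) + w).re := by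
  have him : |w.im| ≤ s * A := (Complex.abs_im_le_norm w).trans hw
  have hre : (1 - s) * A ≤ A + w.re := by
    linarith [neg_abs_le w.re, Complex.abs_re_le_norm w]
  have h1s : 0 < 1 - s := sub_pos.mpr hs₁
  simp only [Complex.add_re, Complex.add_im, Complex.ofReal_re, Complex.ofReal_im, zero_add]
  rw [div_mul_eq_mul_div, le_div_iff₀ h1s]
  calc |w.im| * (1 - s) ≤ s * A * (1 - s) := by gcongr
    _ = s * ((1 - s) * A) := by ring
    _ ≤ s * (A + w.re) := by gcongr

section HalfSpace

variable {N : ℕ} {c : ℝ} {a : Fin N → ℝ} {u : ((Fin N → ℝ) × ℝ) → ℂ}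

lemma measurableSet_HS : MeasurableSet (HS N) :=
  measurableSet_lt measurable_const measurable_snd

lemma aForm_self :
    aForm N c a u u = ((∫ z in HS N, gradSqC u z * z.2 ^ c : ℝ) : ℂ) +
      2 * ∫ z in HS N, (pYc u z * ∑ i, (a i : ℂ) * conj (pXc u i z)) * ((z.2 ^ c : ℝ) : ℂ) := by
  rw [aForm]
  congr 1
  refine (integral_congr_ae (.of_forall fun z => ?_)).trans integral_ofReal
  simp only [gradSqC, Complex.mul_conj, Complex.normSq_eq_norm_sq]
  push_cast
  rfl

lemma norm_two_mul_setIntegral_drift_le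
    (hgrad : Integrable (fun z => gradSqC u z * z.2 ^ c) (volume.restrict (HS N))) :
    ‖2 * ∫ z in HS N, (pYc u z * ∑ i, (a i : ℂ) * conj (pXc u i z)) * ((z.2 ^ c : ℝ) : ℂ)‖
      ≤ √(∑ i, a i ^ 2) * ∫ z in HS N, gradSqC u z * z.2 ^ c := by
  calc ‖2 * ∫ z in HS N, (pYc u z * ∑ i, (a i : ℂ) * conj (pXc u i z)) * ((z.2 ^ c : ℝ) : ℂ)‖
      = 2 * ‖∫ z in HS N, (pYc u z * ∑ i, (a i : ℂ) * conj (pXc u i z)) * ((z.2 ^ c : ℝ) : ℂ)‖ := by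
        rw [norm_mul, Complex.norm_two]
    _ ≤ 2 * ∫ z in HS N, √(∑ i, a i ^ 2) / 2 * (gradSqC u z * z.2 ^ c) := by
        gcongr
        refine norm_integral_le_of_norm_le (hgrad.const_mul _) ?_
        filter_upwards [ae_restrict_mem measurableSet_HS] with z (hz : 0 < z.2)
        have hyc : 0 ≤ z.2 ^ c := Real.rpow_nonneg hz.le c
        rw [norm_mul, Complex.norm_real, Real.norm_of_nonneg hyc, ← mul_assoc]
        gcongr
        exact norm_mul_sum_ofReal_mul_conj_le a _ _
    _ = √(∑ i, a i ^ 2) * ∫ z in HS N, gradSqC u z * z.2 ^ c := by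
        rw [integral_const_mul]; ring

end HalfSpace

theorem stmt_1_general (N : ℕ) (c : ℝ) (a : Fin N → ℝ)
    (ha : Real.sqrt (∑ i, a i ^ 2) < 1)
    (u : ((Fin N → ℝ) × ℝ) → ℂ)
    (hgrad : Integrable (fun z => gradSqC u z * z.2 ^ c) (volume.restrict (HS N))) :
    |(aForm N c a u u).im| ≤
      (Real.sqrt (∑ i, a i ^ 2) / (1 - Real.sqrt (∑ i, a i ^ 2))) * (aForm N c a u u).re := by
  rw [aForm_self]
  exact abs_im_le_div_mul_re_of_norm_le (Real.sqrt_nonneg _) ha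
    (norm_two_mul_setIntegral_drift_le hgrad)

/-- if `|a| < 1`, then for every `C¹` function `u` whose full gradient
lies in `L²_c`, one has `|Im 𝔞(u,u)| ≤ (|a|/(1−|a|)) Re 𝔞(u,u)`; in particular the
form `𝔞` is sectorial. -/
theorem stmt_1 (N : ℕ) (hN : 1 ≤ N) (c : ℝ) (a : Fin N → ℝ)
    (ha : Real.sqrt (∑ i, a i ^ 2) < 1)
    (u : ((Fin N → ℝ) × ℝ) → ℂ) (hu : ContDiff ℝ 1 u)
    (hgrad : Integrable (fun z => gradSqC u z * z.2 ^ c) (volume.restrict (HS N))) :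
    |(aForm N c a u u).im| ≤
      (Real.sqrt (∑ i, a i ^ 2) / (1 - Real.sqrt (∑ i, a i ^ 2))) * (aForm N c a u u).re :=
  stmt_1_general N c a ha u hgrad
end
end

section
/- Let N ≥ 1. There exists a constant C > 0 such that for all z₁, z₂ ∈ ℝ^{N+1} one has C |z₁ − z₂| ≤ sup_{ψ ∈ Ψ} (ψ(z₁) − ψ(z₂)) ≤ |z₁ − z₂|. In particular the function d(z₁,z₂) = sup_{ψ ∈ Ψ}(ψ(z₁) − ψ(z₂)) is a distance on ℝ^{N+1} equivalent to the Euclidean distance. -/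
open Real

noncomputable section

/-- The class `Ψ` of smooth bounded real functions on `ℝ^{N+1}` with `|∇ψ| ≤ 1` and
`|D²ψ| ≤ 1` (operator norms) at every point. -/
def PsiSet (n : ℕ) : Set (EuclideanSpace ℝ (Fin n) → ℝ) :=
  {ψ | ContDiff ℝ (⊤ : ℕ∞) ψ ∧ (∃ M : ℝ, ∀ z, |ψ z| ≤ M) ∧
    (∀ z, ‖fderiv ℝ ψ z‖ ≤ 1) ∧ (∀ z, ‖fderiv ℝ (fderiv ℝ ψ) z‖ ≤ 1)}

lemma arctan_ge_half {s : ℝ} (h0 : 0 ≤ s) (h1 : s ≤ 1) : s / 2 ≤ arctan s := by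
  have key : MonotoneOn (fun t : ℝ => arctan t - t / 2) (Set.Icc 0 1) := by
    apply monotoneOn_of_deriv_nonneg (convex_Icc 0 1)
    · exact (Real.continuous_arctan.sub (continuous_id.div_const 2)).continuousOn
    · intro t _
      exact ((Real.differentiable_arctan t).sub
        ((differentiable_id t).div_const 2)).differentiableWithinAt
    · intro t ht
      rw [interior_Icc] at ht
      have hd : HasDerivAt (fun t : ℝ => arctan t - t / 2) (1 / (1 + t ^ 2) - 1 / 2) t :=
        (Real.hasDerivAt_arctan t).sub ((hasDerivAt_id t).div_const 2)
      rw [hd.deriv]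
      have h1t : (0:ℝ) < 1 + t ^ 2 := by positivity
      have : 1 + t ^ 2 ≤ 2 := by nlinarith [ht.1.le, ht.2.le]
      have := one_div_le_one_div_of_le h1t this
      linarith
  have h := key (Set.mem_Icc.2 ⟨le_refl 0, zero_le_one⟩) (Set.mem_Icc.2 ⟨h0, h1⟩) h0
  simp only [arctan_zero] at h
  linarith

lemma half_le_lam_arctan {r : ℝ} (hr : 0 ≤ r) :
    r / 2 ≤ max 1 r * arctan (r / max 1 r) := by
  set lam := max 1 r with hlamdef
  have hlam : (1:ℝ) ≤ lam := le_max_left _ _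
  have hlam0 : (0:ℝ) < lam := lt_of_lt_of_le one_pos hlam
  have hs0 : 0 ≤ r / lam := div_nonneg hr hlam0.le
  have hs1 : r / lam ≤ 1 := (div_le_one hlam0).2 (le_max_right _ _)
  have h := arctan_ge_half hs0 hs1
  have : lam * (r / lam / 2) ≤ lam * arctan (r / lam) :=
    mul_le_mul_of_nonneg_left h hlam0.le
  calc r / 2 = lam * (r / lam / 2) := by field_simp
    _ ≤ lam * arctan (r / lam) := this

/-- The basic test functions `z ↦ λ · arctan ((f z - a)/λ)` are in `PsiSet`. -/
lemma mem_psiSet (n : ℕ) (lam : ℝ) (hlam : 1 ≤ lam)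
    (f : EuclideanSpace ℝ (Fin n) →L[ℝ] ℝ) (hf : ‖f‖ ≤ 1) (a : ℝ) :
    (fun z => lam * arctan ((f z - a) / lam)) ∈ PsiSet n := by
  have hlam0 : (0:ℝ) < lam := lt_of_lt_of_le one_pos hlam
  set g : ℝ → ℝ := fun t => lam * arctan (t / lam) with hgdef
  set g1 : ℝ → ℝ := fun t => (1 + (t / lam) ^ 2)⁻¹ with hg1def
  set g2 : ℝ → ℝ := fun t =>
    -(2 * (t / lam)) / (lam * (1 + (t / lam) ^ 2) ^ 2) with hg2def
  have hg : ∀ t, HasDerivAt g (g1 t) t := by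
    intro t
    have h1 : HasDerivAt (fun t : ℝ => t / lam) (1 / lam) t := by
      simpa using (hasDerivAt_id t).div_const lam
    have h2 := (Real.hasDerivAt_arctan (t / lam)).comp t h1
    have h3 := h2.const_mul lam
    refine h3.congr_deriv ?_; symm
    have h4 : (0:ℝ) < 1 + (t / lam) ^ 2 := by positivity
    simp only [hg1def]
    field_simp
  have hg1 : ∀ t, HasDerivAt g1 (g2 t) t := by
    intro t
    have hq : HasDerivAt (fun t : ℝ => 1 + (t / lam) ^ 2)
        (2 * (t / lam) * (1 / lam)) t := by
      have h1 : HasDerivAt (fun t : ℝ => t / lam) (1 / lam) t := by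
        simpa using (hasDerivAt_id t).div_const lam
      have := (h1.pow 2).const_add 1
      refine this.congr_deriv ?_
      ring
    have h4 : (0:ℝ) < 1 + (t / lam) ^ 2 := by positivity
    have := hq.inv h4.ne'
    refine this.congr_deriv ?_; symm
    simp only [hg2def]
    field_simp
  have hg1bound : ∀ t, |g1 t| ≤ 1 := by
    intro t
    have h4 : (0:ℝ) < 1 + (t / lam) ^ 2 := by positivity
    rw [abs_of_pos (inv_pos.2 h4)]
    rw [inv_le_one_iff₀]
    right; nlinarith [sq_nonneg (t / lam)]
  have hg2bound : ∀ t, |g2 t| ≤ 1 := by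
    intro t
    set s := t / lam
    have h4 : (0:ℝ) < 1 + s ^ 2 := by positivity
    have h2s : 2 * |s| ≤ 1 + s ^ 2 := by nlinarith [sq_nonneg (|s| - 1), sq_abs s]
    have heq : |g2 t| = 2 * |s| / (lam * (1 + s ^ 2) ^ 2) := by
      rw [hg2def]
      rw [abs_div, abs_neg, abs_mul, abs_two,
        abs_of_pos (by positivity : (0:ℝ) < lam * (1 + s ^ 2) ^ 2)]
    rw [heq, div_le_one (by positivity)]
    nlinarith [abs_nonneg s, sq_nonneg s]
  -- derivatives of ψ
  have hψ' : ∀ z, HasFDerivAt (fun z => lam * arctan ((f z - a) / lam))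
      (g1 (f z - a) • f) z := by
    intro z
    have := (hg (f z - a)).comp_hasFDerivAt z ((f.hasFDerivAt).sub_const a); exact this
  have hfd : fderiv ℝ (fun z => lam * arctan ((f z - a) / lam)) =
      fun z => g1 (f z - a) • f := funext fun z => (hψ' z).fderiv
  refine ⟨?_, ⟨lam * (π / 2), ?_⟩, ?_, ?_⟩
  · have h1 : ContDiff ℝ (⊤ : ℕ∞) (fun z : EuclideanSpace ℝ (Fin n) => (f z - a) / lam) :=
      (f.contDiff.sub contDiff_const).div_const lam
    exact contDiff_const.mul (Real.contDiff_arctan.comp h1)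
  · intro z
    rw [abs_mul, abs_of_pos hlam0]
    refine mul_le_mul_of_nonneg_left ?_ hlam0.le
    exact abs_le.2 ⟨(Real.neg_pi_div_two_lt_arctan _).le, (Real.arctan_lt_pi_div_two _).le⟩
  · intro z
    rw [hfd]
    calc ‖g1 (f z - a) • f‖ = |g1 (f z - a)| * ‖f‖ := by rw [norm_smul (g1 (f z - a)) f, Real.norm_eq_abs]
      _ ≤ 1 * 1 := mul_le_mul (hg1bound _) hf (norm_nonneg _) zero_le_one
      _ = 1 := one_mul 1
  · intro z
    rw [hfd]
    have hc : HasFDerivAt (fun z => g1 (f z - a)) ((g2 (f z - a)) • f) z :=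
      by have := (hg1 (f z - a)).comp_hasFDerivAt z ((f.hasFDerivAt).sub_const a); exact this
    have h2 : HasFDerivAt (fun z => g1 (f z - a) • f)
        (((g2 (f z - a)) • f).smulRight f) z := hc.smul_const f
    rw [h2.fderiv, ContinuousLinearMap.norm_smulRight_apply]
    calc ‖g2 (f z - a) • f‖ * ‖f‖ = |g2 (f z - a)| * ‖f‖ * ‖f‖ := by
          rw [norm_smul (g2 (f z - a)) f, Real.norm_eq_abs]
      _ ≤ 1 * 1 * 1 := by
          refine mul_le_mul (mul_le_mul (hg2bound _) hf (norm_nonneg _) zero_le_one)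
            hf (norm_nonneg _) (by norm_num)
      _ = 1 := by norm_num

/-- Any `ψ ∈ PsiSet` is 1-Lipschitz. -/
lemma psiSet_lipschitz {n : ℕ} {ψ : EuclideanSpace ℝ (Fin n) → ℝ}
    (hψ : ψ ∈ PsiSet n) (z₁ z₂ : EuclideanSpace ℝ (Fin n)) :
    ψ z₁ - ψ z₂ ≤ ‖z₁ - z₂‖ := by
  obtain ⟨hsmooth, _, hgrad, _⟩ := hψ
  have hdiff : ∀ x ∈ (Set.univ : Set (EuclideanSpace ℝ (Fin n))),
      DifferentiableAt ℝ ψ x := fun x _ =>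
    (hsmooth.differentiable (by simp)).differentiableAt
  have h := Convex.norm_image_sub_le_of_norm_fderiv_le hdiff
    (fun x _ => hgrad x) convex_univ (Set.mem_univ z₂) (Set.mem_univ z₁)
  calc ψ z₁ - ψ z₂ ≤ |ψ z₁ - ψ z₂| := le_abs_self _
    _ ≤ 1 * ‖z₁ - z₂‖ := h
    _ = ‖z₁ - z₂‖ := one_mul _

/-- the distance `d(z₁,z₂) = sup_{ψ ∈ Ψ}(ψ(z₁) − ψ(z₂))` is equivalent
to the Euclidean distance: `C|z₁ − z₂| ≤ d(z₁,z₂) ≤ |z₁ − z₂|`. -/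
theorem stmt_15 (N : ℕ) (hN : 1 ≤ N) :
    ∃ C > 0, ∀ z₁ z₂ : EuclideanSpace ℝ (Fin (N + 1)),
      C * ‖z₁ - z₂‖ ≤ sSup ((fun ψ => ψ z₁ - ψ z₂) '' PsiSet (N + 1)) ∧
      sSup ((fun ψ => ψ z₁ - ψ z₂) '' PsiSet (N + 1)) ≤ ‖z₁ - z₂‖ := by
  refine ⟨1/2, by norm_num, fun z₁ z₂ => ?_⟩
  set S := (fun ψ => ψ z₁ - ψ z₂) '' PsiSet (N + 1) with hSdef
  have hbdd : BddAbove S := by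
    refine ⟨‖z₁ - z₂‖, ?_⟩
    rintro x ⟨ψ, hψ, rfl⟩
    exact psiSet_lipschitz hψ z₁ z₂
  have hupper : sSup S ≤ ‖z₁ - z₂‖ := by
    refine Real.sSup_le ?_ (norm_nonneg _)
    rintro x ⟨ψ, hψ, rfl⟩
    exact psiSet_lipschitz hψ z₁ z₂
  refine ⟨?_, hupper⟩
  by_cases h : z₁ = z₂
  · subst h
    have h0 : (0:ℝ) ∈ S := by
      refine ⟨_, mem_psiSet (N+1) 1 le_rfl 0 (by simp) 0, ?_⟩
      simp
    simp only [sub_self, norm_zero, mul_zero]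
    exact le_csSup hbdd h0
  · set r := ‖z₁ - z₂‖ with hrdef
    have hr : 0 < r := by
      rw [hrdef, norm_pos_iff]
      exact sub_ne_zero.2 h
    set u : EuclideanSpace ℝ (Fin (N + 1)) := r⁻¹ • (z₁ - z₂) with hudef
    set f := innerSL ℝ u with hfdef
    have hfnorm : ‖f‖ ≤ 1 := by
      rw [hfdef, innerSL_apply_norm, hudef, norm_smul, norm_inv, Real.norm_eq_abs,
        abs_of_pos hr, ← hrdef, inv_mul_cancel₀ hr.ne']
    set lam := max 1 r with hlamdef
    have hlam : (1:ℝ) ≤ lam := le_max_left _ _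
    have hmem := mem_psiSet (N+1) lam hlam f hfnorm (f z₂)
    have hinner : f z₁ - f z₂ = r := by
      rw [hfdef]
      simp only [innerSL_apply_apply]
      rw [← inner_sub_right, hudef, real_inner_smul_left,
        real_inner_self_eq_norm_sq, ← hrdef]
      field_simp
    have hval : (fun ψ => ψ z₁ - ψ z₂) (fun z => lam * arctan ((f z - f z₂) / lam))
        = lam * arctan (r / lam) := by
      simp only [hinner, sub_self, zero_div, arctan_zero, mul_zero, sub_zero]
    have hmemS : lam * arctan (r / lam) ∈ S := ⟨_, hmem, hval⟩
    calc (1/2) * ‖z₁ - z₂‖ = r / 2 := by rw [← hrdef]; ring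
      _ ≤ lam * arctan (r / lam) := half_le_lam_arctan hr.le
      _ ≤ sSup S := le_csSup hbdd hmemS
end
end

section
/- Let N = 1 and −1 < c < 0. Then there exists a constant C > 0 such that for every u ∈ C_c^∞(cl(ℝ²_+)) with supp u ⊆ ℝ × [0,1] one has (∫_{ℝ²_+} |u|² y^c dx dy)^{1/2} ≤ C ∫_{ℝ²_+} |∇u| y^c dx dy. -/
open MeasureTheory Real ENNReal

noncomputable section

/-- The upper half-plane `ℝ²_+`. -/
def HP : Set (ℝ × ℝ) := {z | 0 < z.2}

/-- Partial derivative of `u` in the `x` direction. -/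
def pX2 (u : ℝ × ℝ → ℝ) (z : ℝ × ℝ) : ℝ := fderiv ℝ u z (1, 0)

/-- Partial derivative of `u` in the `y` direction. -/
def pY2 (u : ℝ × ℝ → ℝ) (z : ℝ × ℝ) : ℝ := fderiv ℝ u z (0, 1)

/-- Euclidean norm of the full gradient `∇u`. -/
def gradNorm2 (u : ℝ × ℝ → ℝ) (z : ℝ × ℝ) : ℝ :=
  Real.sqrt (pX2 u z ^ 2 + pY2 u z ^ 2)

namespace Stmt19Aux

variable {u : ℝ × ℝ → ℝ}

lemma pX2_cont (hu : ContDiff ℝ (⊤ : ℕ∞) u) : Continuous (pX2 u) :=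
  (hu.continuous_fderiv (by simp)).clm_apply continuous_const

lemma pY2_cont (hu : ContDiff ℝ (⊤ : ℕ∞) u) : Continuous (pY2 u) :=
  (hu.continuous_fderiv (by simp)).clm_apply continuous_const

lemma hasDerivX (hu : ContDiff ℝ (⊤ : ℕ∞) u) (y t : ℝ) :
    HasDerivAt (fun t => u (t, y)) (pX2 u (t, y)) t := by
  have h1 : HasFDerivAt u (fderiv ℝ u (t, y)) (t, y) :=
    (hu.differentiable (by simp) (t, y)).hasFDerivAt
  exact h1.comp_hasDerivAt t (HasDerivAt.prodMk (hasDerivAt_id t) (hasDerivAt_const t y))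

lemma hasDerivY (hu : ContDiff ℝ (⊤ : ℕ∞) u) (x s : ℝ) :
    HasDerivAt (fun s => u (x, s)) (pY2 u (x, s)) s := by
  have h1 : HasFDerivAt u (fderiv ℝ u (x, s)) (x, s) :=
    (hu.differentiable (by simp) (x, s)).hasFDerivAt
  exact h1.comp_hasDerivAt s (HasDerivAt.prodMk (hasDerivAt_const s x) (hasDerivAt_id s))

lemma fderiv_zero_of_one_lt (hvan : ∀ z : ℝ × ℝ, 1 < z.2 → u z = 0)
    {z : ℝ × ℝ} (hz : 1 < z.2) : fderiv ℝ u z = 0 := by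
  have hopen : IsOpen {w : ℝ × ℝ | 1 < w.2} := isOpen_lt continuous_const continuous_snd
  have hev : u =ᶠ[nhds z] (fun _ => (0 : ℝ)) :=
    Filter.eventuallyEq_of_mem (hopen.mem_nhds hz) (fun w hw => hvan w hw)
  rw [Filter.EventuallyEq.fderiv_eq hev, fderiv_fun_const]
  rfl

lemma fderiv_zero_of_nmem (z : ℝ × ℝ) (hz : z ∉ tsupport u) : fderiv ℝ u z = 0 := by
  by_contra h
  exact hz (support_fderiv_subset ℝ (by simpa [Function.mem_support] using h))

/-- FTC bound in the `x` direction. -/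
lemma boundX (hu : ContDiff ℝ (⊤ : ℕ∞) u) (hcs : HasCompactSupport u) (x y : ℝ) :
    ENNReal.ofReal |u (x, y)| ≤ ∫⁻ t, ENNReal.ofReal |pX2 u (t, y)| := by
  obtain ⟨R, hR⟩ := (Metric.isBounded_iff_subset_closedBall 0).mp hcs.isBounded
  set a : ℝ := -(|R| + |x| + 1) with ha
  have hax : a ≤ x := by
    have h1 := abs_nonneg R
    have h2 := neg_abs_le x
    simp only [ha]; linarith
  have hderiv : ∀ t ∈ Set.uIcc a x, HasDerivAt (fun t => u (t, y)) (pX2 u (t, y)) t :=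
    fun t _ => hasDerivX hu y t
  have hcont : Continuous (fun t => pX2 u (t, y)) :=
    (pX2_cont hu).comp (continuous_id.prodMk continuous_const)
  have hfa : u (a, y) = 0 := by
    apply image_eq_zero_of_notMem_tsupport
    intro hmem
    have h1 : ‖((a, y) : ℝ × ℝ)‖ ≤ R := mem_closedBall_zero_iff.mp (hR hmem)
    have h2 : |a| ≤ ‖((a, y) : ℝ × ℝ)‖ := by
      simpa [Real.norm_eq_abs] using norm_fst_le ((a, y) : ℝ × ℝ)
    have h3 : |a| = |R| + |x| + 1 := by
      rw [ha, abs_neg, abs_of_nonneg (by positivity)]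
    have h4 := le_abs_self R
    have h5 := abs_nonneg x
    linarith
  have heq : u (x, y) = ∫ t in a..x, pX2 u (t, y) := by
    rw [intervalIntegral.integral_eq_sub_of_hasDerivAt hderiv
      (hcont.intervalIntegrable a x), hfa, sub_zero]
  rw [heq, intervalIntegral.integral_of_le hax]
  calc ENNReal.ofReal |∫ t in Set.Ioc a x, pX2 u (t, y)|
      ≤ ∫⁻ t in Set.Ioc a x, ENNReal.ofReal |pX2 u (t, y)| := by
        refine le_trans (ENNReal.ofReal_le_ofReal ?_) ENNReal.ofReal_toReal_le
        simpa [Real.norm_eq_abs] using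
          norm_integral_le_lintegral_norm (μ := volume.restrict (Set.Ioc a x))
            (fun t => pX2 u (t, y))
    _ ≤ ∫⁻ t, ENNReal.ofReal |pX2 u (t, y)| := setLIntegral_le_lintegral _ _

/-- FTC bound in the `y` direction, with weight. -/
lemma boundY (hu : ContDiff ℝ (⊤ : ℕ∞) u)
    (hvan : ∀ z : ℝ × ℝ, 1 < z.2 → u z = 0) {c : ℝ} (hc : c ≤ 0)
    (x : ℝ) {y : ℝ} (hy : 0 < y) :
    ENNReal.ofReal |u (x, y)| ≤
      ∫⁻ s in Set.Ioi 0, ENNReal.ofReal (|pY2 u (x, s)| * s ^ c) := by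
  set b : ℝ := y + 1 with hb
  have hyb : y ≤ b := by simp only [hb]; linarith
  have hub : u (x, b) = 0 := hvan (x, b) (by simp only [hb]; simpa using hy)
  have hderiv : ∀ s ∈ Set.uIcc y b, HasDerivAt (fun s => u (x, s)) (pY2 u (x, s)) s :=
    fun s _ => hasDerivY hu x s
  have hcont : Continuous (fun s => pY2 u (x, s)) :=
    (pY2_cont hu).comp (continuous_const.prodMk continuous_id)
  have heq : u (x, y) = -∫ s in y..b, pY2 u (x, s) := by
    rw [intervalIntegral.integral_eq_sub_of_hasDerivAt hderiv
      (hcont.intervalIntegrable y b), hub, zero_sub, neg_neg]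
  have hmeas : Measurable (fun s : ℝ => ENNReal.ofReal (|pY2 u (x, s)| * s ^ c)) :=
    ((hcont.abs.measurable).mul (measurable_id'.pow_const c)).ennreal_ofReal
  rw [heq, abs_neg, intervalIntegral.integral_of_le hyb]
  calc ENNReal.ofReal |∫ s in Set.Ioc y b, pY2 u (x, s)|
      ≤ ∫⁻ s in Set.Ioc y b, ENNReal.ofReal |pY2 u (x, s)| := by
        refine le_trans (ENNReal.ofReal_le_ofReal ?_) ENNReal.ofReal_toReal_le
        simpa [Real.norm_eq_abs] using
          norm_integral_le_lintegral_norm (μ := volume.restrict (Set.Ioc y b))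
            (fun s => pY2 u (x, s))
    _ ≤ ∫⁻ s in Set.Ioc y b, ENNReal.ofReal (|pY2 u (x, s)| * s ^ c) := by
        refine setLIntegral_mono hmeas (fun s hs => ENNReal.ofReal_le_ofReal ?_)
        rcases le_or_gt s 1 with h1 | h1
        · have hs0 : 0 < s := lt_trans hy hs.1
          have : (1 : ℝ) ≤ s ^ c := Real.one_le_rpow_of_pos_of_le_one_of_nonpos hs0 h1 hc
          exact le_mul_of_one_le_right (abs_nonneg _) this
        · have : pY2 u (x, s) = 0 := by
            unfold pY2
            rw [fderiv_zero_of_one_lt hvan (by exact h1)]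
            rfl
          rw [this]
          simp [abs_nonneg]
    _ ≤ ∫⁻ s in Set.Ioi 0, ENNReal.ofReal (|pY2 u (x, s)| * s ^ c) :=
        lintegral_mono_set (fun s hs => lt_trans hy hs.1)

end Stmt19Aux

open Stmt19Aux in
/-- for `N = 1` and `−1 < c < 0`, there is `C > 0` such that
`‖u‖_{L²_c} ≤ C ‖∇u‖_{L¹_c}` for all smooth compactly supported `u` on the
closed half-plane supported in `ℝ × [0,1]`. -/
theorem stmt_19 (c : ℝ) (hc₁ : -1 < c) (hc₂ : c < 0) :
    ∃ C > 0, ∀ u : ℝ × ℝ → ℝ, ContDiff ℝ (⊤ : ℕ∞) u → HasCompactSupport u →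
      (∀ z : ℝ × ℝ, 1 < z.2 → u z = 0) →
      (∫ z in HP, u z ^ 2 * z.2 ^ c) ^ (1 / 2 : ℝ) ≤
        C * ∫ z in HP, gradNorm2 u z * z.2 ^ c := by
  refine ⟨1, one_pos, fun u hu hcs hvan => ?_⟩
  -- setup
  have hHPm : MeasurableSet HP := measurableSet_lt measurable_const measurable_snd
  have hHP : HP = (Set.univ : Set ℝ) ×ˢ Set.Ioi (0 : ℝ) := by
    ext z; simp [HP, Set.mem_prod]
  set ν : Measure ℝ := (volume : Measure ℝ).restrict (Set.Ioi 0) with hνdef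
  have hrestrict : (volume : Measure (ℝ × ℝ)).restrict HP = (volume : Measure ℝ).prod ν := by
    rw [hHP, Measure.volume_eq_prod, ← Measure.prod_restrict, Measure.restrict_univ]
  -- continuity / measurability
  have hpXc : Continuous (pX2 u) := pX2_cont hu
  have hpYc : Continuous (pY2 u) := pY2_cont hu
  have hgc : Continuous (gradNorm2 u) :=
    Real.continuous_sqrt.comp ((hpXc.pow 2).add (hpYc.pow 2))
  have hrpm : Measurable (fun y : ℝ => y ^ c) := measurable_id'.pow_const c
  have hmX : Measurable (fun z : ℝ × ℝ => ENNReal.ofReal (|pX2 u z| * z.2 ^ c)) :=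
    ((hpXc.abs.measurable).mul (hrpm.comp measurable_snd)).ennreal_ofReal
  have hmY : Measurable (fun z : ℝ × ℝ => ENNReal.ofReal (|pY2 u z| * z.2 ^ c)) :=
    ((hpYc.abs.measurable).mul (hrpm.comp measurable_snd)).ennreal_ofReal
  have hmG : Measurable (fun z : ℝ × ℝ => ENNReal.ofReal (gradNorm2 u z * z.2 ^ c)) :=
    ((hgc.measurable).mul (hrpm.comp measurable_snd)).ennreal_ofReal
  -- the three main ENNReal quantities
  set L : ℝ≥0∞ := ∫⁻ z in HP, ENNReal.ofReal (u z ^ 2 * z.2 ^ c) with hLdef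
  set G : ℝ≥0∞ := ∫⁻ z in HP, ENNReal.ofReal (gradNorm2 u z * z.2 ^ c) with hGdef
  set Fx : ℝ → ℝ≥0∞ := fun y => ∫⁻ t, ENNReal.ofReal |pX2 u (t, y)| with hFxdef
  set A : ℝ → ℝ≥0∞ := fun x => ∫⁻ s in Set.Ioi 0, ENNReal.ofReal (|pY2 u (x, s)| * s ^ c)
    with hAdef
  have hFxm : Measurable Fx :=
    Measurable.lintegral_prod_left (f := fun t y => ENNReal.ofReal |pX2 u (t, y)|)
      ((hpXc.abs.measurable).ennreal_ofReal)
  have hAm : Measurable A :=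
    Measurable.lintegral_prod_right (f := fun x s => ENNReal.ofReal (|pY2 u (x, s)| * s ^ c))
      (ν := ν) hmY
  have hBm : Measurable (fun y => Fx y * ENNReal.ofReal (y ^ c)) :=
    hFxm.mul (hrpm.ennreal_ofReal)
  -- pointwise inequality
  have key1 : ∀ z ∈ HP, ENNReal.ofReal (u z ^ 2 * z.2 ^ c) ≤
      A z.1 * (Fx z.2 * ENNReal.ofReal (z.2 ^ c)) := by
    intro z hz
    have hz2 : 0 < z.2 := hz
    have h1 : ENNReal.ofReal |u z| ≤ Fx z.2 := boundX hu hcs z.1 z.2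
    have h2 : ENNReal.ofReal |u z| ≤ A z.1 := boundY hu hvan hc₂.le z.1 hz2
    calc ENNReal.ofReal (u z ^ 2 * z.2 ^ c)
        = ENNReal.ofReal (|u z| * (|u z| * z.2 ^ c)) := by
          congr 1; rw [← sq_abs]; ring
      _ = ENNReal.ofReal |u z| * (ENNReal.ofReal |u z| * ENNReal.ofReal (z.2 ^ c)) := by
          rw [ENNReal.ofReal_mul (abs_nonneg _), ENNReal.ofReal_mul (abs_nonneg _)]
      _ ≤ A z.1 * (Fx z.2 * ENNReal.ofReal (z.2 ^ c)) :=
          mul_le_mul' h2 (mul_le_mul' h1 le_rfl)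
  -- Tonelli
  have step1 : L ≤ ∫⁻ z in HP, A z.1 * (Fx z.2 * ENNReal.ofReal (z.2 ^ c)) := by
    rw [hLdef]
    refine setLIntegral_mono ?_ key1
    exact (hAm.comp measurable_fst).mul
      ((hFxm.comp measurable_snd).mul ((hrpm.comp measurable_snd).ennreal_ofReal))
  have step2 : (∫⁻ z in HP, A z.1 * (Fx z.2 * ENNReal.ofReal (z.2 ^ c))) =
      (∫⁻ x, A x) * (∫⁻ y, Fx y * ENNReal.ofReal (y ^ c) ∂ν) := by
    rw [show (∫⁻ z in HP, A z.1 * (Fx z.2 * ENNReal.ofReal (z.2 ^ c))) =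
        ∫⁻ z, A z.1 * (Fx z.2 * ENNReal.ofReal (z.2 ^ c)) ∂((volume : Measure ℝ).prod ν) by
      rw [← hrestrict]]
    exact lintegral_prod_mul hAm.aemeasurable hBm.aemeasurable
  have step3 : (∫⁻ x, A x) = ∫⁻ z in HP, ENNReal.ofReal (|pY2 u z| * z.2 ^ c) := by
    rw [show (∫⁻ z in HP, ENNReal.ofReal (|pY2 u z| * z.2 ^ c)) =
        ∫⁻ z, ENNReal.ofReal (|pY2 u z| * z.2 ^ c) ∂((volume : Measure ℝ).prod ν) by
      rw [← hrestrict]]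
    rw [lintegral_prod _ hmY.aemeasurable]
  have step4 : (∫⁻ y, Fx y * ENNReal.ofReal (y ^ c) ∂ν) =
      ∫⁻ z in HP, ENNReal.ofReal (|pX2 u z| * z.2 ^ c) := by
    have e1 : ∀ y : ℝ, Fx y * ENNReal.ofReal (y ^ c) =
        ∫⁻ t, ENNReal.ofReal (|pX2 u (t, y)| * y ^ c) := by
      intro y
      rw [hFxdef]
      have hm : Measurable (fun t : ℝ => ENNReal.ofReal |pX2 u (t, y)|) :=
        ((hpXc.comp (continuous_id.prodMk continuous_const)).abs.measurable).ennreal_ofReal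
      rw [← lintegral_mul_const _ hm]
      congr 1
      ext t
      rw [ENNReal.ofReal_mul (abs_nonneg _)]
    simp_rw [e1]
    rw [lintegral_lintegral_swap (μ := (volume : Measure ℝ)) (ν := ν)
      (f := fun t y => ENNReal.ofReal (|pX2 u (t, y)| * y ^ c)) hmX.aemeasurable |>.symm]
    rw [show (∫⁻ z in HP, ENNReal.ofReal (|pX2 u z| * z.2 ^ c)) =
        ∫⁻ z, ENNReal.ofReal (|pX2 u z| * z.2 ^ c) ∂((volume : Measure ℝ).prod ν) by
      rw [← hrestrict]]
    rw [lintegral_prod _ hmX.aemeasurable]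
  -- comparison with gradient integral
  have hcompX : (∫⁻ z in HP, ENNReal.ofReal (|pX2 u z| * z.2 ^ c)) ≤ G := by
    rw [hGdef]
    refine setLIntegral_mono hmG (fun z hz => ENNReal.ofReal_le_ofReal ?_)
    have hz2 : (0:ℝ) < z.2 := hz
    refine mul_le_mul_of_nonneg_right ?_ (Real.rpow_nonneg hz2.le c)
    rw [gradNorm2, ← Real.sqrt_sq_eq_abs]
    exact Real.sqrt_le_sqrt (by nlinarith [sq_nonneg (pY2 u z)])
  have hcompY : (∫⁻ z in HP, ENNReal.ofReal (|pY2 u z| * z.2 ^ c)) ≤ G := by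
    rw [hGdef]
    refine setLIntegral_mono hmG (fun z hz => ENNReal.ofReal_le_ofReal ?_)
    have hz2 : (0:ℝ) < z.2 := hz
    refine mul_le_mul_of_nonneg_right ?_ (Real.rpow_nonneg hz2.le c)
    rw [gradNorm2, ← Real.sqrt_sq_eq_abs]
    exact Real.sqrt_le_sqrt (by nlinarith [sq_nonneg (pX2 u z)])
  have hLG : L ≤ G * G := by
    calc L ≤ _ := step1
      _ = _ := step2
      _ ≤ G * G := by
          rw [step3, step4]; exact mul_le_mul' hcompY hcompX
  -- finiteness of G
  have hGfin : G ≠ ⊤ := by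
    obtain ⟨R₀, hR₀⟩ := (Metric.isBounded_iff_subset_closedBall 0).mp hcs.isBounded
    set R : ℝ := |R₀| + 1 with hRdef
    have hR : tsupport u ⊆ Metric.closedBall 0 R :=
      hR₀.trans (Metric.closedBall_subset_closedBall (by
        simp only [hRdef]; linarith [le_abs_self R₀]))
    have hR0 : (0:ℝ) ≤ R := by positivity
    have hgcs : HasCompactSupport (gradNorm2 u) := by
      refine HasCompactSupport.intro hcs (fun z hz => ?_)
      have := fderiv_zero_of_nmem z hz
      simp [gradNorm2, pX2, pY2, this]
    obtain ⟨M, hM⟩ := hgc.bounded_above_of_compact_support hgcs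
    have hM0 : 0 ≤ M := le_trans (norm_nonneg _) (hM (0, 0))
    set f : ℝ → ℝ≥0∞ := (Set.Icc (-R) R).indicator (fun _ => ENNReal.ofReal M) with hfdef
    set g : ℝ → ℝ≥0∞ := (Set.Ioc 0 R).indicator (fun y => ENNReal.ofReal (y ^ c)) with hgdef
    have hfm : Measurable f := (measurable_const.indicator measurableSet_Icc)
    have hgm : Measurable g := (hrpm.ennreal_ofReal).indicator measurableSet_Ioc
    have hbound : ∀ z ∈ HP, ENNReal.ofReal (gradNorm2 u z * z.2 ^ c) ≤ f z.1 * g z.2 := by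
      intro z hz
      have hz2 : (0:ℝ) < z.2 := hz
      by_cases hzsupp : z ∈ tsupport u
      · have hzball := hR hzsupp
        rw [mem_closedBall_zero_iff] at hzball
        have h1 : |z.1| ≤ R := le_trans (norm_fst_le z) hzball
        have h2 : |z.2| ≤ R := le_trans (norm_snd_le z) hzball
        have hz1mem : z.1 ∈ Set.Icc (-R) R := by
          constructor <;> [linarith [neg_abs_le z.1]; linarith [le_abs_self z.1]]
        have hz2mem : z.2 ∈ Set.Ioc 0 R := ⟨hz2, le_trans (le_abs_self _) h2⟩
        rw [hfdef, hgdef]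
        simp only [Set.indicator_of_mem hz1mem, Set.indicator_of_mem hz2mem]
        rw [← ENNReal.ofReal_mul hM0]
        refine ENNReal.ofReal_le_ofReal
          (mul_le_mul_of_nonneg_right ?_ (Real.rpow_nonneg hz2.le c))
        exact le_trans (le_abs_self _) (by simpa [Real.norm_eq_abs] using hM z)
      · have hfz := fderiv_zero_of_nmem z hzsupp
        have : gradNorm2 u z = 0 := by simp [gradNorm2, pX2, pY2, hfz]
        rw [this, zero_mul, ENNReal.ofReal_zero]
        exact zero_le
    have hGle : G ≤ (∫⁻ x, f x) * (∫⁻ y, g y ∂ν) := by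
      calc G ≤ ∫⁻ z in HP, f z.1 * g z.2 := by
            rw [hGdef]
            exact setLIntegral_mono ((hfm.comp measurable_fst).mul
              (hgm.comp measurable_snd)) hbound
        _ = (∫⁻ x, f x) * (∫⁻ y, g y ∂ν) := by
            rw [show (∫⁻ z in HP, f z.1 * g z.2) =
                ∫⁻ z, f z.1 * g z.2 ∂((volume : Measure ℝ).prod ν) by
              rw [← hrestrict]]
            exact lintegral_prod_mul hfm.aemeasurable hgm.aemeasurable
    have hf_fin : (∫⁻ x, f x) ≠ ⊤ := by
      rw [hfdef, lintegral_indicator measurableSet_Icc, setLIntegral_const, Real.volume_Icc]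
      exact ENNReal.mul_ne_top ENNReal.ofReal_ne_top ENNReal.ofReal_ne_top
    have hg_fin : (∫⁻ y, g y ∂ν) ≠ ⊤ := by
      have hInt : IntegrableOn (fun y : ℝ => y ^ c) (Set.Ioc 0 R) := by
        have h := intervalIntegral.intervalIntegrable_rpow' (a := 0) (b := R) hc₁
        rwa [intervalIntegrable_iff_integrableOn_Ioc_of_le hR0] at h
      have hlt : (∫⁻ y in Set.Ioc 0 R, ENNReal.ofReal (y ^ c)) < ⊤ :=
        hInt.lintegral_lt_top
      have h2 : (∫⁻ y, g y ∂ν) ≤ ∫⁻ y in Set.Ioc 0 R, ENNReal.ofReal (y ^ c) := by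
        rw [hgdef, ← lintegral_indicator measurableSet_Ioc]
        exact setLIntegral_le_lintegral _ _
      exact ne_top_of_le_ne_top hlt.ne h2
    exact ne_top_of_le_ne_top (ENNReal.mul_ne_top hf_fin hg_fin) hGle
  -- back to real integrals
  have hLHSeq : (∫ z in HP, u z ^ 2 * z.2 ^ c) = L.toReal := by
    rw [hLdef]
    refine integral_eq_lintegral_of_nonneg_ae ?_ ?_
    · exact ae_restrict_of_forall_mem hHPm (fun z hz =>
        mul_nonneg (sq_nonneg _) (Real.rpow_nonneg (le_of_lt hz) c))
    · exact (((hu.continuous.pow 2).measurable).mul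
        (hrpm.comp measurable_snd)).aestronglyMeasurable
  have hRHSeq : (∫ z in HP, gradNorm2 u z * z.2 ^ c) = G.toReal := by
    rw [hGdef]
    refine integral_eq_lintegral_of_nonneg_ae ?_ ?_
    · exact ae_restrict_of_forall_mem hHPm (fun z hz =>
        mul_nonneg (Real.sqrt_nonneg _) (Real.rpow_nonneg (le_of_lt hz) c))
    · exact ((hgc.measurable).mul (hrpm.comp measurable_snd)).aestronglyMeasurable
  rw [hLHSeq, hRHSeq, one_mul]
  have ht : L.toReal ≤ G.toReal * G.toReal := by
    have h := ENNReal.toReal_mono (ENNReal.mul_ne_top hGfin hGfin) hLG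
    rwa [ENNReal.toReal_mul] at h
  calc L.toReal ^ (1 / 2 : ℝ)
      ≤ (G.toReal * G.toReal) ^ (1 / 2 : ℝ) :=
        Real.rpow_le_rpow ENNReal.toReal_nonneg ht (by norm_num)
    _ = G.toReal := by
        rw [← Real.sqrt_eq_rpow]
        exact Real.sqrt_mul_self ENNReal.toReal_nonneg

end
end
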